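/- Let L be an n×n graph Laplacian and E an n×n real matrix such that L' = L + E is also a graph Laplacian, let p ∈ {1, 2, ∞}, and suppose ‖E‖_p ≤ ε‖L‖_p < 1 for some ε > 0, where ‖·‖_p denotes the operator norm on matrices induced by the vector ℓp norm. Let s, r ∈ ℝⁿ satisfy ‖s‖_p ≤ γ and ‖r‖_p ≤ γ. Then the superposition distances (with α = 1 and input norm ℓp) computed on L and on L' satisfy |d_sps^{L'}(s,r) − d_sps^{L}(s,r)| ≤ 2γ‖L‖_p ε. -/

import Mathlib

open Matrix MeasureTheory

/-- A graph Laplacian: real symmetric matrix with nonpositive off-diagonal entries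
whose rows each sum to zero. -/
def IsGraphLaplacian {n : ℕ} (L : Matrix (Fin n) (Fin n) ℝ) : Prop :=
  L.IsSymm ∧ (∀ i j, i ≠ j → L i j ≤ 0) ∧ ∀ i, ∑ j, L i j = 0

/-- The ℓp norm of a vector in `ℝⁿ`. -/
noncomputable def lpNorm (p : ENNReal) [Fact (1 ≤ p)] {n : ℕ} (x : Fin n → ℝ) : ℝ :=
  ‖(WithLp.equiv p (Fin n → ℝ)).symm x‖

/-- The operator norm on matrices induced by the vector ℓp norm:
`‖M‖_p := sup {‖Mx‖_p : ‖x‖_p = 1}`. -/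
noncomputable def lpOpNorm (p : ENNReal) [Fact (1 ≤ p)] {n : ℕ}
    (M : Matrix (Fin n) (Fin n) ℝ) : ℝ :=
  sSup ((fun x => lpNorm p (M.mulVec x)) '' {x : Fin n → ℝ | lpNorm p x = 1})

/-- The superposition distance with diffusion constant `α = 1` and input norm ℓp:
`d_sps^L(s,r) := ∫₀^∞ e^{−t} ‖e^{−Lt}(s − r)‖_p dt`. -/
noncomputable def spsDistP (p : ENNReal) [Fact (1 ≤ p)] {n : ℕ}
    (L : Matrix (Fin n) (Fin n) ℝ) (s r : Fin n → ℝ) : ℝ :=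
  ∫ t in Set.Ioi (0 : ℝ), Real.exp (-t) * lpNorm p ((NormedSpace.exp ((-t) • L)).mulVec (s - r))

/-! For `t ≥ 0` the heat kernel `exp (-t • L)` of a graph Laplacian is doubly stochastic: its
entries are nonnegative because `-t • L` is nonnegative off the diagonal, and its row and column
sums are `1` because `L` is symmetric and kills the all-ones vector. By Birkhoff's theorem it is a
convex combination of permutation matrices, hence a contraction for every `ℓp` norm. Duhamel's
formula then bounds `‖exp (-t • (L + E)) - exp (-t • L)‖_p` by `t ‖E‖_p`, and integrating against
`e^{-t}` costs the factor `∫₀^∞ t e^{-t} dt = 1`. -/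

open NormedSpace

namespace Matrix

variable {ι : Type*} [Fintype ι] [DecidableEq ι]

section Exponential

open scoped Matrix.Norms.Operator

theorem exp_mulVec_of_mulVec_eq_zero {M : Matrix ι ι ℝ} {v : ι → ℝ} (h : M *ᵥ v = 0) :
    exp M *ᵥ v = v := by
  have hsum := (exp_series_hasSum_exp' (𝕂 := ℝ) M).map (mulVec.addMonoidHomLeft v)
    (Continuous.matrix_mulVec continuous_id continuous_const)
  refine hsum.unique ?_
  convert hasSum_ite_eq 0 v with k
  rcases eq_or_ne k 0 with rfl | hk
  · simp [mulVec.addMonoidHomLeft]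
  · obtain ⟨k, rfl⟩ := Nat.exists_eq_succ_of_ne_zero hk
    simp [mulVec.addMonoidHomLeft, smul_mulVec, pow_succ, ← mulVec_mulVec, h]

theorem exp_apply_nonneg_of_nonneg {N : Matrix ι ι ℝ} (hN : ∀ i j, 0 ≤ N i j) (i j : ι) :
    0 ≤ exp N i j :=
  (Pi.hasSum.mp (Pi.hasSum.mp (exp_series_hasSum_exp' (𝕂 := ℝ) N) i) j).nonneg fun k =>
    mul_nonneg (by positivity) (pow_apply_nonneg hN k i j)

theorem exp_apply_nonneg_of_offDiag_nonneg {M : Matrix ι ι ℝ}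
    (hM : ∀ i j, i ≠ j → 0 ≤ M i j) (i j : ι) : 0 ≤ exp M i j := by
  set c := ∑ k, |M k k|
  set N : Matrix ι ι ℝ := M + diagonal fun _ => c
  have hN : ∀ i j, 0 ≤ N i j := by
    intro i j
    rcases eq_or_ne i j with rfl | hij
    · have := (neg_le_abs (M i i)).trans
        (Finset.single_le_sum (fun k _ => abs_nonneg (M k k)) (Finset.mem_univ i))
      simp only [N, add_apply, diagonal_apply_eq]
      linarith
    · simpa [N, hij] using hM i j hij
  have hsplit : exp M = exp N * diagonal (exp fun _ => -c) := by
    rw [← exp_diagonal, ← exp_add_of_commute]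
    · rw [add_assoc, diagonal_add]
      simp
    · simpa using (scalar_commute (-c) (fun _ => Commute.all _ _) N).symm
  rw [hsplit, mul_diagonal]
  exact mul_nonneg (exp_apply_nonneg_of_nonneg hN i j)
    (by simp [← Real.exp_eq_exp_ℝ, Real.exp_nonneg])

end Exponential

theorem exp_mem_doublyStochastic {M : Matrix ι ι ℝ} (hsymm : M.IsSymm)
    (hoff : ∀ i j, i ≠ j → 0 ≤ M i j) (hrow : M *ᵥ 1 = 0) :
    exp M ∈ doublyStochastic ℝ ι := by
  have hrow' := exp_mulVec_of_mulVec_eq_zero hrow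
  refine mem_doublyStochastic.2 ⟨exp_apply_nonneg_of_offDiag_nonneg hoff, hrow', ?_⟩
  rw [← hsymm.exp, vecMul_transpose, hrow']

variable (p : ENNReal) [Fact (1 ≤ p)]

noncomputable def toLpCLM : Matrix ι ι ℝ ≃ₐ[ℝ] (WithLp p (ι → ℝ) →L[ℝ] WithLp p (ι → ℝ)) :=
  (toLpLinAlgEquiv p).trans (Module.End.toContinuousLinearMap _)

variable {p}

theorem toLpCLM_apply (M : Matrix ι ι ℝ) (x : WithLp p (ι → ℝ)) :
    toLpCLM p M x = WithLp.toLp p (M *ᵥ WithLp.ofLp x) :=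
  rfl

open scoped Matrix.Norms.Operator in
theorem toLpCLM_exp (M : Matrix ι ι ℝ) : toLpCLM p (exp M) = exp (toLpCLM p M) :=
  map_exp (toLpCLM p) (LinearMap.continuous_of_finiteDimensional (toLpCLM p (ι := ι)).toLinearMap) M

theorem norm_toLpCLM_permMatrix_le (σ : Equiv.Perm ι) : ‖toLpCLM p (σ.permMatrix ℝ)‖ ≤ 1 := by
  refine ContinuousLinearMap.opNorm_le_bound _ zero_le_one fun x => ?_
  rw [one_mul, toLpCLM_apply, permMatrix_mulVec]
  have : WithLp.toLp p (WithLp.ofLp x ∘ σ) = LinearIsometryEquiv.piLpCongrLeft p ℝ ℝ σ.symm x := by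
    ext i
    simp [Equiv.piCongrLeft']
  rw [this, LinearIsometryEquiv.norm_map]

theorem norm_toLpCLM_le_one_of_mem_doublyStochastic {M : Matrix ι ι ℝ}
    (hM : M ∈ doublyStochastic ℝ ι) : ‖toLpCLM p M‖ ≤ 1 := by
  rw [← SetLike.mem_coe, doublyStochastic_eq_convexHull_permMatrix] at hM
  have hball :
      M ∈ toLpCLM p ⁻¹' Metric.closedBall (0 : WithLp p (ι → ℝ) →L[ℝ] WithLp p (ι → ℝ)) 1 := by
    refine convexHull_min ?_ ((convex_closedBall 0 1).linear_preimage (toLpCLM p).toLinearMap) hM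
    rintro _ ⟨σ, rfl⟩
    simpa using norm_toLpCLM_permMatrix_le σ
  simpa using hball

end Matrix

theorem IsGraphLaplacian.exp_neg_smul_mem_doublyStochastic {n : ℕ}
    {L : Matrix (Fin n) (Fin n) ℝ} (hL : IsGraphLaplacian L) {t : ℝ} (ht : 0 ≤ t) :
    exp ((-t) • L) ∈ doublyStochastic ℝ (Fin n) := by
  obtain ⟨hsymm, hoff, hrow⟩ := hL
  refine exp_mem_doublyStochastic (hsymm.smul _) (fun i j hij => ?_) ?_
  · simpa using mul_nonneg_of_nonpos_of_nonpos (neg_nonpos.2 ht) (hoff i j hij)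
  · ext i
    simp [mulVec, dotProduct, ← Finset.mul_sum, hrow]

theorem lpNorm_eq_norm_toLp (p : ENNReal) [Fact (1 ≤ p)] {n : ℕ} (x : Fin n → ℝ) :
    lpNorm p x = ‖WithLp.toLp p x‖ :=
  rfl

theorem lpOpNorm_eq_norm_toLpCLM (p : ENNReal) [Fact (1 ≤ p)] {n : ℕ}
    (M : Matrix (Fin n) (Fin n) ℝ) : lpOpNorm p M = ‖toLpCLM p M‖ := by
  rw [← ContinuousLinearMap.sSup_sphere_eq_norm, lpOpNorm]
  congr 1
  ext a
  constructor
  · rintro ⟨x, hx, rfl⟩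
    exact ⟨WithLp.toLp p x, by simpa [lpNorm_eq_norm_toLp] using hx, rfl⟩
  · rintro ⟨y, hy, rfl⟩
    exact ⟨WithLp.ofLp y, by simpa [lpNorm_eq_norm_toLp] using hy, rfl⟩

section Semigroup

variable {𝔸 : Type*} [NormedRing 𝔸] [NormedAlgebra ℝ 𝔸] [CompleteSpace 𝔸]

theorem continuous_exp_smul (a : 𝔸) : Continuous fun t : ℝ => exp (t • a) :=
  continuous_iff_continuousAt.2 fun t => (hasDerivAt_exp_smul_const (𝕂 := ℝ) a t).continuousAt

theorem norm_exp_neg_smul_sub_exp_neg_smul_le {a b : 𝔸}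
    (ha : ∀ u : ℝ, 0 ≤ u → ‖exp ((-u) • a)‖ ≤ 1) (hb : ∀ u : ℝ, 0 ≤ u → ‖exp ((-u) • b)‖ ≤ 1)
    {t : ℝ} (ht : 0 ≤ t) : ‖exp ((-t) • b) - exp ((-t) • a)‖ ≤ t * ‖b - a‖ := by
  let g : ℝ → 𝔸 := fun s => exp ((-s) • b) * exp ((s - t) • a)
  have hderiv : ∀ s, HasDerivAt g (exp ((-s) • b) * (a - b) * exp ((s - t) • a)) s := by
    intro s
    have hb' := (hasDerivAt_exp_smul_const (𝕂 := ℝ) b (-s)).scomp s (hasDerivAt_neg s)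
    have ha' := (hasDerivAt_exp_smul_const (𝕂 := ℝ) a (s - t)).scomp s
      ((hasDerivAt_id s).sub_const t)
    convert hb'.mul ha' using 1
    · rfl
    rw [← (((Commute.refl a).smul_right (s - t)).exp_right).eq]
    simp only [Function.comp_apply, id, neg_one_smul, one_smul]
    noncomm_ring
  have hbound : ∀ s ∈ Set.Icc 0 t, ‖exp ((-s) • b) * (a - b) * exp ((s - t) • a)‖ ≤ ‖b - a‖ := by
    rintro s ⟨hs, hst⟩
    have hta : ‖exp ((s - t) • a)‖ ≤ 1 := by
      simpa using ha (t - s) (sub_nonneg.2 hst)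
    calc ‖exp ((-s) • b) * (a - b) * exp ((s - t) • a)‖
        ≤ ‖exp ((-s) • b)‖ * ‖a - b‖ * ‖exp ((s - t) • a)‖ := norm_mul₃_le
      _ ≤ 1 * ‖a - b‖ * 1 := by gcongr; exact hb s hs
      _ = ‖b - a‖ := by rw [one_mul, mul_one, norm_sub_rev]
  have := (convex_Icc 0 t).norm_image_sub_le_of_norm_hasDerivWithin_le
    (fun s _ => (hderiv s).hasDerivWithinAt) hbound (Set.left_mem_Icc.2 ht) (Set.right_mem_Icc.2 ht)
  simpa [g, Real.norm_of_nonneg ht, mul_comm] using this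

end Semigroup

section LaplaceTransform

open Set

theorem integral_mul_exp_neg_Ioi : ∫ t in Ioi (0 : ℝ), t * Real.exp (-t) = 1 := by
  have h := Real.Gamma_eq_integral two_pos
  rw [Real.Gamma_two] at h
  norm_num at h
  simpa [mul_comm] using h.symm

theorem integrableOn_mul_exp_neg_Ioi : IntegrableOn (fun t : ℝ => t * Real.exp (-t)) (Ioi 0) := by
  have h := Real.GammaIntegral_convergent two_pos
  norm_num at h
  simpa [mul_comm] using h

variable {E : Type*} [NormedAddCommGroup E] [NormedSpace ℝ E] [CompleteSpace E]

theorem integrableOn_exp_neg_mul_norm_exp_neg_smul_apply {A : E →L[ℝ] E}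
    (hA : ∀ u : ℝ, 0 ≤ u → ‖exp ((-u) • A)‖ ≤ 1) (y : E) :
    IntegrableOn (fun t => Real.exp (-t) * ‖exp ((-t) • A) y‖) (Ioi 0) := by
  have hcont : Continuous fun t : ℝ => exp ((-t) • A) :=
    (continuous_exp_smul A).comp continuous_neg
  refine Integrable.mono' ((integrableOn_exp_neg_Ioi 0).mul_const ‖y‖)
    (by fun_prop : Continuous fun t => Real.exp (-t) * ‖exp ((-t) • A) y‖).aestronglyMeasurable ?_
  refine (ae_restrict_iff' measurableSet_Ioi).2 (.of_forall fun t ht => ?_)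
  rw [Real.norm_of_nonneg (by positivity)]
  gcongr
  simpa using (exp ((-t) • A)).le_of_opNorm_le (hA t (le_of_lt ht)) y

theorem abs_integral_exp_neg_mul_norm_exp_neg_smul_apply_sub_le {A B : E →L[ℝ] E}
    (hA : ∀ u : ℝ, 0 ≤ u → ‖exp ((-u) • A)‖ ≤ 1) (hB : ∀ u : ℝ, 0 ≤ u → ‖exp ((-u) • B)‖ ≤ 1)
    (y : E) :
    |(∫ t in Ioi 0, Real.exp (-t) * ‖exp ((-t) • B) y‖) -
        ∫ t in Ioi 0, Real.exp (-t) * ‖exp ((-t) • A) y‖| ≤ ‖B - A‖ * ‖y‖ := by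
  have hpointwise : ∀ t ∈ Ioi (0 : ℝ), ‖Real.exp (-t) * ‖exp ((-t) • B) y‖ -
      Real.exp (-t) * ‖exp ((-t) • A) y‖‖ ≤ ‖B - A‖ * ‖y‖ * (t * Real.exp (-t)) := by
    intro t ht
    have hdiff := norm_exp_neg_smul_sub_exp_neg_smul_le (a := A) (b := B) hA hB (le_of_lt ht)
    rw [← mul_sub, norm_mul, Real.norm_of_nonneg (Real.exp_pos _).le, Real.norm_eq_abs]
    calc Real.exp (-t) * |‖exp ((-t) • B) y‖ - ‖exp ((-t) • A) y‖|
        ≤ Real.exp (-t) * ‖(exp ((-t) • B) - exp ((-t) • A)) y‖ := by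
          gcongr
          exact abs_norm_sub_norm_le _ _
      _ ≤ Real.exp (-t) * (t * ‖B - A‖ * ‖y‖) := by
          gcongr
          exact (exp ((-t) • B) - exp ((-t) • A)).le_of_opNorm_le hdiff y
      _ = ‖B - A‖ * ‖y‖ * (t * Real.exp (-t)) := by ring
  rw [← integral_sub (integrableOn_exp_neg_mul_norm_exp_neg_smul_apply hB y)
    (integrableOn_exp_neg_mul_norm_exp_neg_smul_apply hA y), ← Real.norm_eq_abs]
  calc _ ≤ ∫ t in Ioi 0, ‖B - A‖ * ‖y‖ * (t * Real.exp (-t)) :=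
        norm_integral_le_of_norm_le (integrableOn_mul_exp_neg_Ioi.const_mul _)
          ((ae_restrict_iff' measurableSet_Ioi).2 (.of_forall hpointwise))
    _ = ‖B - A‖ * ‖y‖ := by rw [integral_const_mul, integral_mul_exp_neg_Ioi, mul_one]

end LaplaceTransform

section SuperpositionDistance

open Set

variable (p : ENNReal) [Fact (1 ≤ p)] {n : ℕ}

theorem IsGraphLaplacian.norm_exp_neg_smul_toLpCLM_le_one {L : Matrix (Fin n) (Fin n) ℝ}
    (hL : IsGraphLaplacian L) {u : ℝ} (hu : 0 ≤ u) : ‖exp ((-u) • toLpCLM p L)‖ ≤ 1 := by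
  rw [← map_smul, ← toLpCLM_exp]
  exact norm_toLpCLM_le_one_of_mem_doublyStochastic (hL.exp_neg_smul_mem_doublyStochastic hu)

theorem spsDistP_eq_integral (L : Matrix (Fin n) (Fin n) ℝ) (s r : Fin n → ℝ) :
    spsDistP p L s r =
      ∫ t in Ioi 0, Real.exp (-t) * ‖exp ((-t) • toLpCLM p L) (WithLp.toLp p (s - r))‖ := by
  unfold spsDistP
  congr! with t
  rw [lpNorm_eq_norm_toLp, ← map_smul, ← toLpCLM_exp]
  rfl

theorem abs_spsDistP_sub_le {L L' : Matrix (Fin n) (Fin n) ℝ} (hL : IsGraphLaplacian L)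
    (hL' : IsGraphLaplacian L') (s r : Fin n → ℝ) :
    |spsDistP p L' s r - spsDistP p L s r| ≤ lpOpNorm p (L' - L) * lpNorm p (s - r) := by
  rw [spsDistP_eq_integral, spsDistP_eq_integral, lpOpNorm_eq_norm_toLpCLM, map_sub,
    lpNorm_eq_norm_toLp]
  exact abs_integral_exp_neg_mul_norm_exp_neg_smul_apply_sub_le
    (fun _ => hL.norm_exp_neg_smul_toLpCLM_le_one p)
    (fun _ => hL'.norm_exp_neg_smul_toLpCLM_le_one p) _

end SuperpositionDistance

theorem spsDist_stability_general {n : ℕ} (L E : Matrix (Fin n) (Fin n) ℝ)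
    (hL : IsGraphLaplacian L) (hL' : IsGraphLaplacian (L + E))
    (p : ENNReal) [Fact (1 ≤ p)]
    (ε γ : ℝ)
    (hE : lpOpNorm p E ≤ ε * lpOpNorm p L)
    (s r : Fin n → ℝ) (hs : lpNorm p s ≤ γ) (hr : lpNorm p r ≤ γ) :
    |spsDistP p (L + E) s r - spsDistP p L s r| ≤ 2 * γ * lpOpNorm p L * ε := by
  have hsr : lpNorm p (s - r) ≤ 2 * γ :=
    (norm_sub_le _ _).trans ((add_le_add hs hr).trans_eq (two_mul γ).symm)
  have hE₀ : 0 ≤ lpOpNorm p E := by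
    rw [lpOpNorm_eq_norm_toLpCLM]
    exact norm_nonneg _
  calc |spsDistP p (L + E) s r - spsDistP p L s r|
      ≤ lpOpNorm p E * lpNorm p (s - r) := by
        simpa only [add_sub_cancel_left] using abs_spsDistP_sub_le p hL hL' s r
    _ ≤ ε * lpOpNorm p L * (2 * γ) := mul_le_mul hE hsr (norm_nonneg _) (hE₀.trans hE)
    _ = 2 * γ * lpOpNorm p L * ε := by ring

theorem spsDist_stability {n : ℕ} (L E : Matrix (Fin n) (Fin n) ℝ)
    (hL : IsGraphLaplacian L) (hL' : IsGraphLaplacian (L + E))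
    (p : ENNReal) [Fact (1 ≤ p)] (hp : p = 1 ∨ p = 2 ∨ p = ⊤)
    (ε γ : ℝ) (hε : 0 < ε)
    (hE : lpOpNorm p E ≤ ε * lpOpNorm p L) (hsmall : ε * lpOpNorm p L < 1)
    (s r : Fin n → ℝ) (hs : lpNorm p s ≤ γ) (hr : lpNorm p r ≤ γ) :
    |spsDistP p (L + E) s r - spsDistP p L s r| ≤ 2 * γ * lpOpNorm p L * ε :=
  spsDist_stability_general L E hL hL' p ε γ hE s r hs hr
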